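/- arXiv:1804.04718 — 2 statements merged into one kernel-verified Lean document; each statement's English description precedes it below -/
import Mathlib

section
/- Let f : ℝ → ℂ be continuous with compact support and differentiable at 0. Then the limit as μ→0+ of ∫_ℝ f(x)/(x + iμ) dx exists and equals P∫_ℝ f(x)/x dx − iπ·f(0), where P∫ denotes the Cauchy principal value (limit as ε→0+ of the integral over |x| ≥ ε). -/
/-!
Write `f x = f 0 + x * g x` with `g = dslope f 0`, which is continuous, and choose `R` with
`support f ⊆ [-R, R]`. As `1 / x` is odd, the `f 0` part of the principal-value integral
vanishes, leaving `∫ g` over `[-R, R] ∩ {ε ≤ |x|}`. For `μ > 0` the `f 0` part is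
`f 0 * (log (R + iμ) - log (-R + iμ))`, which tends to `-iπ f 0` because `-R + iμ` approaches
the branch cut of `log` from above, and what is left is the integral of `x / (x + iμ) * g x`.
Both remainders tend to `∫_{-R}^{R} g` by dominated convergence: their kernels are bounded
by `1` and tend to `1` off `0`.
-/

open MeasureTheory Filter Topology Set

section DominatedConvergence

variable {ι α 𝕜 E : Type*} [MeasurableSpace α] {μ : Measure α} {l : Filter ι}
  [l.IsCountablyGenerated] [NormedField 𝕜] [NormedAddCommGroup E] [NormedSpace 𝕜 E]
  [NormedSpace ℝ E]

theorem tendsto_integral_smul_of_norm_le_one {k : ι → α → 𝕜} {g : α → E}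
    (hg : Integrable g μ)
    (hk_meas : ∀ᶠ i in l, AEStronglyMeasurable (k i) μ)
    (hk_le : ∀ᶠ i in l, ∀ᵐ x ∂μ, ‖k i x‖ ≤ 1)
    (hk_lim : ∀ᵐ x ∂μ, Tendsto (fun i => k i x) l (𝓝 1)) :
    Tendsto (fun i => ∫ x, k i x • g x ∂μ) l (𝓝 (∫ x, g x ∂μ)) := by
  refine tendsto_integral_filter_of_dominated_convergence (fun x => ‖g x‖)
    (hk_meas.mono fun i hi => hi.smul hg.aestronglyMeasurable) ?_ hg.norm ?_
  · filter_upwards [hk_le] with i hi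
    filter_upwards [hi] with x hx
    rw [norm_smul]
    exact mul_le_of_le_one_left (norm_nonneg _) hx
  · filter_upwards [hk_lim] with x hx
    simpa using hx.smul_const (g x)

end DominatedConvergence

theorem setIntegral_eq_zero_of_odd {E : Type*} [NormedAddCommGroup E] [NormedSpace ℝ E]
    {s : Set ℝ} {h : ℝ → E} (hs : MeasurableSet s) (hs_neg : -s = s)
    (h_odd : ∀ x, h (-x) = -h x) : ∫ x in s, h x = 0 := by
  have h_ind_odd : ∀ x, s.indicator h (-x) = -s.indicator h x := by
    intro x
    have hmem : -x ∈ s ↔ x ∈ s := by rw [← Set.mem_neg, hs_neg]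
    by_cases hx : x ∈ s <;> simp [hmem, hx, h_odd]
  have h_eq_neg : ∫ x, s.indicator h x = -∫ x, s.indicator h x :=
    calc ∫ x, s.indicator h x = ∫ x, s.indicator h (-x) := (integral_neg_eq_self _ _).symm
      _ = -∫ x, s.indicator h x := by simp_rw [h_ind_odd, integral_neg]
  have h_two_smul : (2 : ℝ) • ∫ x, s.indicator h x = 0 := by
    rw [two_smul]
    nth_rewrite 2 [h_eq_neg]
    exact add_neg_cancel _
  rw [← integral_indicator hs]
  exact (smul_eq_zero.1 h_two_smul).resolve_left two_ne_zero

section ShiftedInverse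

open Complex

theorem ofReal_add_I_mul_mem_slitPlane {μ : ℝ} (hμ : μ ≠ 0) (x : ℝ) :
    (x : ℂ) + I * μ ∈ slitPlane :=
  mem_slitPlane_iff.2 (Or.inr (by simpa using hμ))

theorem ofReal_add_I_mul_ne_zero {μ : ℝ} (hμ : μ ≠ 0) (x : ℝ) : (x : ℂ) + I * μ ≠ 0 :=
  slitPlane_ne_zero (ofReal_add_I_mul_mem_slitPlane hμ x)

theorem tendsto_ofReal_add_I_mul (x : ℝ) :
    Tendsto (fun μ : ℝ => (x : ℂ) + I * μ) (𝓝[>] 0) (𝓝[{z | 0 ≤ z.im}] x) := by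
  refine tendsto_nhdsWithin_iff.2 ⟨?_, ?_⟩
  · have hcont : Continuous fun μ : ℝ => (x : ℂ) + I * μ := by fun_prop
    simpa using (hcont.tendsto 0).mono_left nhdsWithin_le_nhds
  · filter_upwards [self_mem_nhdsWithin] with μ hμ
    simpa using hμ.out.le

theorem integral_inv_ofReal_add_I_mul {μ : ℝ} (hμ : μ ≠ 0) (a b : ℝ) :
    ∫ x in a..b, ((x : ℂ) + I * μ)⁻¹ = log (b + I * μ) - log (a + I * μ) := by
  refine intervalIntegral.integral_eq_sub_of_hasDerivAt
    (f := fun x : ℝ => log ((x : ℂ) + I * μ)) (fun x _ => ?_) ?_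
  · simpa using ((hasDerivAt_id x).ofReal_comp.add_const (I * μ)).clog_real
      (ofReal_add_I_mul_mem_slitPlane hμ x)
  · refine Continuous.intervalIntegrable ?_ a b
    exact (by fun_prop : Continuous fun x : ℝ => (x : ℂ) + I * μ).inv₀
      (ofReal_add_I_mul_ne_zero hμ)

theorem tendsto_setIntegral_Icc_inv_ofReal_add_I_mul {R : ℝ} (hR : 0 < R) :
    Tendsto (fun μ : ℝ => ∫ x in Icc (-R) R, ((x : ℂ) + I * μ)⁻¹) (𝓝[>] 0)
      (𝓝 (-(Real.pi * I))) := by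
  have h_right : Tendsto (fun μ : ℝ => log (R + I * μ)) (𝓝[>] 0) (𝓝 (Real.log R)) := by
    rw [ofReal_log hR.le]
    exact (continuousAt_clog (ofReal_mem_slitPlane.2 hR)).tendsto.comp
      ((tendsto_ofReal_add_I_mul R).mono_right nhdsWithin_le_nhds)
  have h_left : Tendsto (fun μ : ℝ => log (((-R : ℝ) : ℂ) + I * μ)) (𝓝[>] 0)
      (𝓝 (Real.log R + Real.pi * I)) := by
    have h := tendsto_log_nhdsWithin_im_nonneg_of_re_neg_of_im_zero
      (z := ((-R : ℝ) : ℂ)) (by simpa using hR) (by simp)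
    rw [norm_real, Real.norm_eq_abs, abs_neg, abs_of_pos hR] at h
    exact h.comp (tendsto_ofReal_add_I_mul (-R))
  have h_sub := h_right.sub h_left
  rw [show (Real.log R : ℂ) - (Real.log R + Real.pi * I) = -(Real.pi * I) by ring] at h_sub
  refine h_sub.congr' ?_
  filter_upwards [self_mem_nhdsWithin] with μ hμ
  rw [integral_Icc_eq_integral_Ioc, ← intervalIntegral.integral_of_le (by linarith),
    integral_inv_ofReal_add_I_mul (ne_of_gt hμ)]

end ShiftedInverse

section Plemelj

open Complex

theorem eq_add_mul_dslope_zero (f : ℝ → ℂ) (x : ℝ) : f x = f 0 + x * dslope f 0 x := by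
  have h := sub_smul_dslope f 0 x
  rw [sub_zero, real_smul] at h
  rw [h]
  ring

variable {f : ℝ → ℂ} {R : ℝ}

theorem setIntegral_abs_ge_div_eq (hfR : ∀ x ∉ Icc (-R) R, f x = 0)
    (hg : Continuous (dslope f 0)) {ε : ℝ} (hε : 0 < ε) :
    ∫ x in {x : ℝ | ε ≤ |x|}, f x / x =
      ∫ x in Icc (-R) R,
        {x : ℝ | ε ≤ |x|}.indicator (1 : ℝ → ℝ) x • dslope f 0 x := by
  set S := {x : ℝ | ε ≤ |x|}
  have hS_closed : IsClosed S := isClosed_le continuous_const continuous_abs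
  have hA : IsCompact (Icc (-R) R ∩ S) := isCompact_Icc.inter_right hS_closed
  have hA_ne : ∀ x ∈ Icc (-R) R ∩ S, (x : ℂ) ≠ 0 := fun x hx h0 => by
    have hx := hx.2
    simp only [S, mem_ofPred_eq, ofReal_eq_zero.1 h0, abs_zero] at hx
    linarith
  have h_inv_int : IntegrableOn (fun x : ℝ => (x : ℂ)⁻¹) (Icc (-R) R ∩ S) :=
    (continuous_ofReal.continuousOn.inv₀ hA_ne).integrableOn_compact hA
  have h_inv_odd : ∫ x in Icc (-R) R ∩ S, (x : ℂ)⁻¹ = 0 := by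
    refine setIntegral_eq_zero_of_odd hA.measurableSet ?_ fun x => by push_cast; exact inv_neg
    ext x
    simp [S, and_comm]
  calc ∫ x in S, f x / x = ∫ x in Icc (-R) R ∩ S, f x / x :=
        setIntegral_eq_of_subset_of_forall_sdiff_eq_zero hS_closed.measurableSet
          inter_subset_right fun x hx => by rw [hfR x fun h => hx.2 ⟨h, hx.1⟩, zero_div]
    _ = ∫ x in Icc (-R) R ∩ S, (f 0 * (x : ℂ)⁻¹ + dslope f 0 x) := by
        refine setIntegral_congr_fun hA.measurableSet fun x hx => ?_
        have hx0 := hA_ne x hx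
        rw [eq_add_mul_dslope_zero f x]
        field_simp
    _ = ∫ x in Icc (-R) R ∩ S, dslope f 0 x := by
        rw [integral_add (h_inv_int.const_mul _) (hg.continuousOn.integrableOn_compact hA),
          integral_const_mul, h_inv_odd, mul_zero, zero_add]
    _ = ∫ x in Icc (-R) R, S.indicator 1 x • dslope f 0 x := by
        rw [← setIntegral_indicator hS_closed.measurableSet]
        congr 1 with x
        by_cases hx : x ∈ S <;> simp [hx]

theorem tendsto_setIntegral_abs_ge_div (hfR : ∀ x ∉ Icc (-R) R, f x = 0)
    (hg : Continuous (dslope f 0)) :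
    Tendsto (fun ε : ℝ => ∫ x in {x : ℝ | ε ≤ |x|}, f x / x) (𝓝[>] 0)
      (𝓝 (∫ x in Icc (-R) R, dslope f 0 x)) := by
  have h_lim : Tendsto (fun ε : ℝ => ∫ x in Icc (-R) R,
      {x : ℝ | ε ≤ |x|}.indicator (1 : ℝ → ℝ) x • dslope f 0 x) (𝓝[>] 0)
      (𝓝 (∫ x in Icc (-R) R, dslope f 0 x)) := by
    refine tendsto_integral_smul_of_norm_le_one hg.integrableOn_Icc
      (.of_forall fun ε => (measurable_one.indicator
        (isClosed_le continuous_const continuous_abs).measurableSet).aestronglyMeasurable)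
      (.of_forall fun ε => .of_forall fun x => ?_) ?_
    · by_cases hx : ε ≤ |x| <;> simp [hx]
    · filter_upwards [ae_restrict_of_ae (volume.ae_ne 0)] with x hx
      refine tendsto_const_nhds.congr' ?_
      filter_upwards [Ioo_mem_nhdsGT (abs_pos.2 hx)] with ε hε
      simp [hε.2.le]
  refine h_lim.congr' ?_
  filter_upwards [self_mem_nhdsWithin] with ε hε
  exact (setIntegral_abs_ge_div_eq hfR hg hε).symm

theorem integral_div_ofReal_add_I_mul_eq (hfR : ∀ x ∉ Icc (-R) R, f x = 0)
    (hg : Continuous (dslope f 0)) {μ : ℝ} (hμ : μ ≠ 0) :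
    ∫ x, f x / (x + I * μ) = f 0 * (∫ x in Icc (-R) R, ((x : ℂ) + I * μ)⁻¹)
      + ∫ x in Icc (-R) R, ((x : ℂ) / (x + I * μ)) • dslope f 0 x := by
  have h_den : Continuous fun x : ℝ => (x : ℂ) + I * μ := by fun_prop
  have h_ne := ofReal_add_I_mul_ne_zero hμ
  have h_int_inv : IntegrableOn (fun x : ℝ => ((x : ℂ) + I * μ)⁻¹) (Icc (-R) R) :=
    (h_den.inv₀ h_ne).integrableOn_Icc
  have h_int_slope : IntegrableOn (fun x : ℝ => ((x : ℂ) / (x + I * μ)) • dslope f 0 x)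
      (Icc (-R) R) := ((continuous_ofReal.div h_den h_ne).smul hg).integrableOn_Icc
  rw [← setIntegral_eq_integral_of_forall_compl_eq_zero fun x hx => by rw [hfR x hx, zero_div],
    ← integral_const_mul, ← integral_add (h_int_inv.const_mul _) h_int_slope]
  refine setIntegral_congr_fun measurableSet_Icc fun x _ => ?_
  rw [eq_add_mul_dslope_zero f x, smul_eq_mul]
  field_simp [h_ne x]

theorem tendsto_integral_div_ofReal_add_I_mul (hR : 0 < R)
    (hfR : ∀ x ∉ Icc (-R) R, f x = 0) (hg : Continuous (dslope f 0)) :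
    Tendsto (fun μ : ℝ => ∫ x, f x / (x + I * μ)) (𝓝[>] 0)
      (𝓝 ((∫ x in Icc (-R) R, dslope f 0 x) - Real.pi * I * f 0)) := by
  have h_lim : Tendsto
      (fun μ : ℝ => ∫ x in Icc (-R) R, ((x : ℂ) / (x + I * μ)) • dslope f 0 x) (𝓝[>] 0)
      (𝓝 (∫ x in Icc (-R) R, dslope f 0 x)) := by
    refine tendsto_integral_smul_of_norm_le_one hg.integrableOn_Icc
      ?_ (.of_forall fun μ => .of_forall fun x => ?_) ?_
    · filter_upwards [self_mem_nhdsWithin] with μ hμ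
      exact (continuous_ofReal.div (by fun_prop)
        (ofReal_add_I_mul_ne_zero (ne_of_gt hμ))).aestronglyMeasurable
    · rw [norm_div]
      refine div_le_one_of_le₀ ?_ (norm_nonneg _)
      simpa using abs_re_le_norm ((x : ℂ) + I * μ)
    · filter_upwards [ae_restrict_of_ae (volume.ae_ne 0)] with x hx
      have hx' : (x : ℂ) ≠ 0 := ofReal_ne_zero.2 hx
      have h_den := (tendsto_ofReal_add_I_mul x).mono_right nhdsWithin_le_nhds
      simpa [div_eq_mul_inv, hx'] using (h_den.inv₀ hx').const_mul (x : ℂ)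
  have h_sum := ((tendsto_setIntegral_Icc_inv_ofReal_add_I_mul hR).const_mul (f 0)).add h_lim
  rw [show f 0 * -(Real.pi * I) + ∫ x in Icc (-R) R, dslope f 0 x
    = (∫ x in Icc (-R) R, dslope f 0 x) - Real.pi * I * f 0 by ring] at h_sum
  refine h_sum.congr' ?_
  filter_upwards [self_mem_nhdsWithin] with μ hμ
  exact (integral_div_ofReal_add_I_mul_eq hfR hg (ne_of_gt hμ)).symm

end Plemelj

/-- Sokhotski–Plemelj formula: for `f : ℝ → ℂ` continuous with compact support and
differentiable at `0`, the limit as `μ → 0⁺` of `∫ f(x)/(x + iμ) dx` exists and equals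
`P∫ f(x)/x dx - iπ f(0)`, where the principal value `P∫` is the limit as `ε → 0⁺`
of the integral over `{|x| ≥ ε}`. -/
theorem sokhotski_plemelj (f : ℝ → ℂ) (hf : Continuous f) (hsupp : HasCompactSupport f)
    (hdiff : DifferentiableAt ℝ f 0) :
    ∃ P : ℂ,
      Tendsto (fun ε : ℝ => ∫ x in {x : ℝ | ε ≤ |x|}, f x / (x : ℂ))
        (nhdsWithin 0 (Set.Ioi 0)) (nhds P) ∧
      Tendsto (fun μ : ℝ => ∫ x : ℝ, f x / ((x : ℂ) + Complex.I * (μ : ℂ)))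
        (nhdsWithin 0 (Set.Ioi 0))
        (nhds (P - (Real.pi : ℂ) * Complex.I * f 0)) := by
  obtain ⟨R, hR, h_tsupport⟩ := hsupp.isBounded.subset_closedBall_lt 0 0
  have hfR : ∀ x ∉ Icc (-R) R, f x = 0 := fun x hx =>
    image_eq_zero_of_notMem_tsupport fun h => hx (abs_le.1 (by simpa using h_tsupport h))
  have hg : Continuous (dslope f 0) :=
    continuousOn_univ.1 ((continuousOn_dslope univ_mem).2 ⟨hf.continuousOn, hdiff⟩)
  exact ⟨_, tendsto_setIntegral_abs_ge_div hfR hg,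
    tendsto_integral_div_ofReal_add_I_mul hR hfR hg⟩
end

section
/- Let f : ℝ → ℝ be bounded and continuous, and let z ∈ ℝ. Then lim_{x→0+} (x/√(2π)) · ∫_0^∞ f(z − s) · s^(−3/2) · exp(−x²/(2s)) ds = f(z). -/
/-! The substitution `s = x² / (2 t²)` turns the kernel `x s^(-3/2) e^(-x²/(2s)) ds / √(2π)` on
`(0, ∞)` into the Gaussian weight `2 e^(-t²) dt / √π`, so the Poisson integral is the Gaussian
average of `t ↦ f (z - x² / (2 t²))`. As `x → 0⁺` this integrand tends to `f z` pointwise and stays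
dominated by `M e^(-t²)`, so dominated convergence gives the limit `f z`. -/

open MeasureTheory Filter Set Real Topology

theorem integral_Ioi_comp_div_sq {E : Type*} [NormedAddCommGroup E] [NormedSpace ℝ E]
    (g : ℝ → E) {a : ℝ} (ha : 0 < a) :
    ∫ t in Ioi 0, (2 * a / t ^ 3) • g (a / t ^ 2) = ∫ s in Ioi 0, g s := by
  have himage : (fun t : ℝ => a / t ^ 2) '' Ioi 0 = Ioi 0 := by
    ext s
    refine ⟨fun ⟨t, (ht : 0 < t), hts⟩ => hts ▸ (by positivity : 0 < a / t ^ 2),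
      fun (hs : 0 < s) => ?_⟩
    refine ⟨√(a / s), sqrt_pos.2 (div_pos ha hs), ?_⟩
    simp only
    rw [sq_sqrt (div_pos ha hs).le, div_div_cancel₀ ha.ne']
  have hderiv : ∀ t ∈ Ioi (0 : ℝ),
      HasDerivWithinAt (fun t : ℝ => a / t ^ 2) (-(2 * a / t ^ 3)) (Ioi 0) t := by
    intro t (ht : 0 < t)
    have := ((hasDerivAt_pow 2 t).inv (by positivity)).const_mul a
    refine (this.congr_deriv ?_).hasDerivWithinAt.congr_of_mem (fun _ _ => ?_) ht
    · field_simp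
      ring
    · simp [div_eq_mul_inv]
  have hinj : InjOn (fun t : ℝ => a / t ^ 2) (Ioi 0) := by
    intro t (ht : 0 < t) u (hu : 0 < u) htu
    have : u ^ 2 = t ^ 2 := by
      simpa [div_eq_div_iff, ha.ne', ht.ne', hu.ne', mul_comm] using htu
    exact ((pow_left_inj₀ hu.le ht.le two_ne_zero).1 this).symm
  conv_rhs =>
    rw [← himage, integral_image_eq_integral_abs_deriv_smul measurableSet_Ioi hderiv hinj]
  refine setIntegral_congr_fun measurableSet_Ioi fun t (ht : 0 < t) => ?_
  rw [abs_neg, abs_of_pos (by positivity : 0 < 2 * a / t ^ 3)]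

theorem rpow_neg_three_halves_div_sq {a t : ℝ} (ha : 0 < a) (ht : 0 < t) :
    (a / t ^ 2) ^ (-(3 : ℝ) / 2) = t ^ 3 / (√a) ^ 3 := by
  have hsq : a / t ^ 2 = (√a / t) ^ (2 : ℝ) := by
    rw [rpow_two, div_pow, sq_sqrt ha.le]
  rw [hsq, ← rpow_mul (by positivity), show (2 : ℝ) * (-3 / 2) = -(3 : ℕ) by norm_num,
    rpow_neg (by positivity), rpow_natCast, div_pow, inv_div]

theorem setIntegral_Ioi_mul_rpow_neg_three_halves_mul_exp (g : ℝ → ℝ) {a : ℝ} (ha : 0 < a) :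
    ∫ s in Ioi 0, g s * s ^ (-(3 : ℝ) / 2) * exp (-a / s)
      = 2 / √a * ∫ t in Ioi 0, g (a / t ^ 2) * exp (-t ^ 2) := by
  rw [← integral_Ioi_comp_div_sq _ ha, ← integral_const_mul]
  refine setIntegral_congr_fun measurableSet_Ioi fun t (ht : 0 < t) => ?_
  have hexp : -a / (a / t ^ 2) = -t ^ 2 := by field_simp
  rw [smul_eq_mul, rpow_neg_three_halves_div_sq ha ht, hexp]
  field_simp
  rw [pow_succ, sq_sqrt ha.le]
  ring

theorem integral_Ioi_exp_neg_sq : ∫ t in Ioi (0 : ℝ), exp (-t ^ 2) = √π / 2 := by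
  simpa using integral_gaussian_Ioi 1

theorem tendsto_setIntegral_Ioi_comp_div_sq_mul_exp_neg_sq {g : ℝ → ℝ} (hmeas : Measurable g)
    (hg : ContinuousAt g 0) (hb : ∃ M, ∀ y, |g y| ≤ M) :
    Tendsto (fun a => 2 / √π * ∫ t in Ioi 0, g (a / t ^ 2) * exp (-t ^ 2)) (𝓝 0) (𝓝 (g 0)) := by
  obtain ⟨M, hM⟩ := hb
  have hlim : Tendsto (fun a => ∫ t in Ioi 0, g (a / t ^ 2) * exp (-t ^ 2)) (𝓝 0)
      (𝓝 (∫ t in Ioi 0, g 0 * exp (-t ^ 2))) := by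
    refine tendsto_integral_filter_of_dominated_convergence (fun t => M * exp (-t ^ 2))
      (Eventually.of_forall fun a => ?_) (Eventually.of_forall fun a => ?_) ?_ ?_
    · exact (by fun_prop : Measurable fun t => g (a / t ^ 2) * exp (-t ^ 2)).aestronglyMeasurable
    · refine Eventually.of_forall fun t => ?_
      rw [norm_mul, norm_of_nonneg (exp_pos _).le]
      exact mul_le_mul_of_nonneg_right (hM _) (exp_pos _).le
    · have : Integrable fun t : ℝ => M * exp (-t ^ 2) := by
        simpa using (integrable_exp_neg_mul_sq one_pos).const_mul M
      exact this.integrableOn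
    · refine Eventually.of_forall fun t => ?_
      have : Tendsto (fun a : ℝ => a / t ^ 2) (𝓝 0) (𝓝 0) := by
        simpa using (tendsto_id (x := 𝓝 (0 : ℝ))).div_const (t ^ 2)
      exact (hg.tendsto.comp this).mul_const _
  have hval : 2 / √π * ∫ t in Ioi 0, g 0 * exp (-t ^ 2) = g 0 := by
    have : 0 < √π := sqrt_pos.2 pi_pos
    rw [integral_const_mul, integral_Ioi_exp_neg_sq]
    field_simp
  simpa only [hval] using hlim.const_mul (2 / √π)

theorem poisson_integral_eq_gaussian_integral (g : ℝ → ℝ) {x : ℝ} (hx : 0 < x) :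
    x / √(2 * π) * ∫ s in Ioi 0, g s * s ^ (-(3 : ℝ) / 2) * exp (-x ^ 2 / (2 * s))
      = 2 / √π * ∫ t in Ioi 0, g (x ^ 2 / 2 / t ^ 2) * exp (-t ^ 2) := by
  have hexp : ∀ s : ℝ, -x ^ 2 / (2 * s) = -(x ^ 2 / 2) / s := fun s => by
    rw [neg_div, neg_div, div_div]
  simp_rw [hexp]
  rw [setIntegral_Ioi_mul_rpow_neg_three_halves_mul_exp g (by positivity), ← mul_assoc]
  congr 1
  have hπ : 0 < √π := sqrt_pos.2 pi_pos
  rw [sqrt_div' _ zero_le_two, sqrt_sq hx.le, sqrt_mul zero_le_two]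
  field_simp

/-- Boundary-reproducing property of the half-space Poisson-type kernel: if
`f : ℝ → ℝ` is bounded and continuous and `z ∈ ℝ`, then
`lim_{x→0⁺} (x/√(2π)) ∫₀^∞ f(z-s) s^(-3/2) exp(-x²/(2s)) ds = f(z)`. -/
theorem poisson_kernel_boundary_limit (f : ℝ → ℝ) (hf : Continuous f)
    (hb : ∃ M : ℝ, ∀ x : ℝ, |f x| ≤ M) (z : ℝ) :
    Tendsto (fun x : ℝ => (x / Real.sqrt (2 * Real.pi)) *
        ∫ s in Set.Ioi (0:ℝ), f (z - s) * s ^ (-(3:ℝ)/2) * Real.exp (-x ^ 2 / (2 * s)))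
      (nhdsWithin 0 (Set.Ioi 0)) (nhds (f z)) := by
  have hg : Tendsto (fun a => 2 / √π * ∫ t in Ioi 0, f (z - a / t ^ 2) * exp (-t ^ 2)) (𝓝 0)
      (𝓝 (f z)) := by
    simpa using tendsto_setIntegral_Ioi_comp_div_sq_mul_exp_neg_sq (g := fun s => f (z - s))
      (by fun_prop) (by fun_prop) (hb.imp fun _ hM _ => hM _)
  have ha : Tendsto (fun x : ℝ => x ^ 2 / 2) (𝓝[>] 0) (𝓝 0) := by
    simpa using ((continuous_pow 2).div_const 2).tendsto' (0 : ℝ) _ (by simp) |>.mono_left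
      nhdsWithin_le_nhds
  refine (hg.comp ha).congr' ?_
  filter_upwards [self_mem_nhdsWithin] with x (hx : 0 < x)
  exact (poisson_integral_eq_gaussian_integral (fun s => f (z - s)) hx).symm
end
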